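/- Let M ≥ 1, γ₁ᵢ ≠ 0, γᵢᵢ > 0, 0 < ξ₁ < 1 and 0 < ξ₁ + ξᵢ·γᵢᵢ/γ₁ᵢ < 1. Define D = (1 − ξ₁)·γ₁ᵢ − ξᵢ·γᵢᵢ and φ⁽ⁱ⁾ = γᵢᵢ·(γ₁ᵢ + M·D)²/(M·γ₁ᵢ·D). Then φ⁽ⁱ⁾ > 0. -/

import Mathlib

/-!
With `z = ξ₁ + ξᵢ γᵢᵢ / γ₁ᵢ` one has `D = (1 - z) γ₁ᵢ`, so `z < 1` makes `D / γ₁ᵢ` positive: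
`D` and `γ₁ᵢ` have the same sign. Then the denominator `M γ₁ᵢ D` is positive, and
`γ₁ᵢ + M D = γ₁ᵢ (1 + M D / γ₁ᵢ)` is nonzero, so the squared numerator is positive as well.
-/

section

variable {K : Type*} [Field K] [LinearOrder K] [IsStrictOrderedRing K]

lemma mul_pos_of_div_pos {a b : K} (h : 0 < a / b) : 0 < b * a := by
  rcases div_pos_iff.1 h with ⟨ha, hb⟩ | ⟨ha, hb⟩
  · exact mul_pos hb ha
  · exact mul_pos_of_neg_of_neg hb ha

lemma add_mul_ne_zero_of_div_pos {a b m : K} (hm : 0 ≤ m) (h : 0 < a / b) :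
    b + m * a ≠ 0 := by
  have hb : b ≠ 0 := by
    rintro rfl
    simp at h
  have hfactor : b + m * a = b * (1 + m * (a / b)) := by
    field_simp
  rw [hfactor]
  exact mul_ne_zero hb (by positivity)

lemma mul_sq_add_mul_div_pos {a b c m : K} (hm : 0 < m) (hc : 0 < c) (h : 0 < a / b) :
    0 < c * (b + m * a) ^ 2 / (m * b * a) := by
  have hden : 0 < m * b * a := by
    rw [mul_assoc]
    exact mul_pos hm (mul_pos_of_div_pos h)
  have hnum : b + m * a ≠ 0 := add_mul_ne_zero_of_div_pos hm.le h
  positivity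

end

theorem phi_i_pos_general (M : ℕ) (hM : 1 ≤ M) (γ₁ᵢ γᵢᵢ ξ₁ ξᵢ : ℝ)
    (hγ1 : γ₁ᵢ ≠ 0) (hγi : γᵢᵢ > 0)
    (hz1 : ξ₁ + ξᵢ * γᵢᵢ / γ₁ᵢ < 1)
    (D φᵢ : ℝ) (hD : D = (1 - ξ₁) * γ₁ᵢ - ξᵢ * γᵢᵢ)
    (hφ : φᵢ = γᵢᵢ * (γ₁ᵢ + M * D) ^ 2 / (M * γ₁ᵢ * D)) :
    φᵢ > 0 := by
  have hratio : D / γ₁ᵢ = 1 - (ξ₁ + ξᵢ * γᵢᵢ / γ₁ᵢ) := by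
    rw [hD]
    field_simp
    ring
  have hratio_pos : 0 < D / γ₁ᵢ := by linarith
  have hM_pos : (0 : ℝ) < M := by exact_mod_cast hM
  rw [hφ]
  exact mul_sq_add_mul_div_pos hM_pos hγi hratio_pos

/-- Positivity of the fitted volatility parameters φ⁽ⁱ⁾, i ≥ 2, in Theorem 1. -/
theorem phi_i_pos (M : ℕ) (hM : 1 ≤ M) (γ₁ᵢ γᵢᵢ ξ₁ ξᵢ : ℝ)
    (hγ1 : γ₁ᵢ ≠ 0) (hγi : γᵢᵢ > 0) (hξ0 : 0 < ξ₁) (hξ1 : ξ₁ < 1)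
    (hz0 : 0 < ξ₁ + ξᵢ * γᵢᵢ / γ₁ᵢ) (hz1 : ξ₁ + ξᵢ * γᵢᵢ / γ₁ᵢ < 1)
    (D φᵢ : ℝ) (hD : D = (1 - ξ₁) * γ₁ᵢ - ξᵢ * γᵢᵢ)
    (hφ : φᵢ = γᵢᵢ * (γ₁ᵢ + M * D) ^ 2 / (M * γ₁ᵢ * D)) :
    φᵢ > 0 :=
  phi_i_pos_general M hM γ₁ᵢ γᵢᵢ ξ₁ ξᵢ hγ1 hγi hz1 D φᵢ hD hφ
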